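/- arXiv:2502.09420 — 2 statements merged into one kernel-verified Lean document; each statement's English description precedes it below -/
import Mathlib

section
/- Truthful bidding is weakly dominant in optimistic XOR package bid selection: suppose 0 ∈ D and v(0) = 0. For a tuple of B bids (x_1,p_1),…,(x_B,p_B) ∈ ℝ^T × ℝ and a scenario index s, call x* an optimistic outcome for scenario s if x* is one of the profiles {0, x_1, …, x_B} and its bid surplus p − ⟨λ_s, x⟩ (where the profile 0 carries price 0 and each x_b carries price p_b) is maximal among the B+1 pairs {(0,0), (x_1,p_1), …, (x_B,p_B)}. Let v¹ be the supremum, over all bid tuples in (ℝ^T × ℝ)^B and all choices of optimistic outcomes x*_s for each scenario s ∈ {1,…,S}, of the expected profit Σ_{s=1}^S π_s (v(x*_s) − ⟨λ_s, x*_s⟩), valued in ℝ ∪ {−∞}; let v² be the same supremum restricted to truthful bid tuples, i.e. tuples with x_b ∈ D and p_b = v(x_b) for every b ∈ {1,…,B}. Then v² ≥ v¹. -/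
open scoped RealInnerProductSpace

noncomputable section

/-!
Replace every bid `(x, p)` with `x ∈ D` by the truthful bid `(x, v x)` and every other bid by the
null bid `(0, 0)`. Every profile of finite value that was on the menu stays on it. Under truthful
bids the bid surplus of a profile is its true profit, so in each scenario an optimistic outcome
earns at least as much as any profile on the menu, in particular as the original outcome
(which earns `⊥` if it lies outside `D`). Since `π ≥ 0`, the expected profit can only go up.
-/

namespace XorBidding

variable {E ι : Type*} [Zero E]

def IsMenuItem (bids : ι → E × ℝ) (xp : E × ℝ) : Prop :=
  xp = (0, 0) ∨ ∃ b, xp = bids b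

def IsOptimisticOutcome (cost : E → ℝ) (bids : ι → E × ℝ) (x : E) : Prop :=
  ∃ p : ℝ, IsMenuItem bids (x, p) ∧
    ∀ y q, IsMenuItem bids (y, q) → q - cost y ≤ p - cost x

theorem exists_isOptimisticOutcome [Finite ι] (cost : E → ℝ) (bids : ι → E × ℝ) :
    ∃ x, IsOptimisticOutcome cost bids x := by
  let item : Option ι → E × ℝ := fun o => o.elim (0, 0) bids
  have item_isMenuItem : ∀ o, IsMenuItem bids (item o) := by
    rintro (_ | b)
    exacts [Or.inl rfl, Or.inr ⟨b, rfl⟩]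
  obtain ⟨o, ho⟩ := Finite.exists_max fun o => (item o).2 - cost (item o).1
  refine ⟨(item o).1, (item o).2, item_isMenuItem o, ?_⟩
  rintro y q (hyq | ⟨b, hyq⟩)
  · obtain ⟨rfl, rfl⟩ := Prod.mk.inj hyq
    exact ho none
  · obtain ⟨rfl, rfl⟩ := Prod.ext_iff.1 hyq
    exact ho (some b)

variable (v : E → EReal)

def IsTruthful (bids : ι → E × ℝ) : Prop :=
  ∀ b, (bids b).1 ∈ {x | v x ≠ ⊥} ∧ (((bids b).2 : ℝ) : EReal) = v (bids b).1

def truthfulBids (bids : ι → E × ℝ) (b : ι) : E × ℝ :=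
  if v (bids b).1 = ⊥ then (0, 0) else ((bids b).1, (v (bids b).1).toReal)

variable {v}

theorem isTruthful_truthfulBids (hv : ∀ x, v x ≠ ⊤) (hv0 : v 0 = 0) (bids : ι → E × ℝ) :
    IsTruthful v (truthfulBids v bids) := by
  intro b
  unfold truthfulBids
  split_ifs with h
  · simp [hv0]
  · exact ⟨h, EReal.coe_toReal (hv _) h⟩

theorem IsMenuItem.truthfulBids (hv0 : v 0 = 0) {bids : ι → E × ℝ} {x : E} {p : ℝ}
    (hx : IsMenuItem bids (x, p)) (hvx : v x ≠ ⊥) :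
    IsMenuItem (truthfulBids v bids) (x, (v x).toReal) := by
  rcases hx with hx | ⟨b, hb⟩
  · left
    obtain rfl : x = 0 := congrArg Prod.fst hx
    simp_all
  · right
    obtain rfl : x = (bids b).1 := congrArg Prod.fst hb
    exact ⟨b, by simp [XorBidding.truthfulBids, hvx]⟩

theorem IsTruthful.price_eq {bids : ι → E × ℝ} (h : IsTruthful v bids) (hv0 : v 0 = 0)
    {y : E} {q : ℝ} (hyq : IsMenuItem bids (y, q)) : (q : EReal) = v y := by
  rcases hyq with hyq | ⟨b, hb⟩
  · simp_all
  · obtain ⟨rfl, rfl⟩ := Prod.ext_iff.1 hb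
    exact (h b).2

theorem IsOptimisticOutcome.profit_le {cost : E → ℝ} {bids : ι → E × ℝ} {x : E}
    (hx : IsOptimisticOutcome cost bids x) (htruth : IsTruthful v bids) (hv0 : v 0 = 0)
    {y : E} {q : ℝ} (hyq : IsMenuItem bids (y, q)) :
    v y - (cost y : EReal) ≤ v x - (cost x : EReal) := by
  obtain ⟨p, hxp, hmax⟩ := hx
  rw [← htruth.price_eq hv0 hyq, ← htruth.price_eq hv0 hxp]
  exact_mod_cast hmax y q hyq

theorem profit_le_of_isOptimisticOutcome_truthfulBids (hv : ∀ x, v x ≠ ⊤) (hv0 : v 0 = 0)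
    {cost : E → ℝ} {bids : ι → E × ℝ} {x x' : E} {p : ℝ} (hx : IsMenuItem bids (x, p))
    (hx' : IsOptimisticOutcome cost (truthfulBids v bids) x') :
    v x - (cost x : EReal) ≤ v x' - (cost x' : EReal) := by
  by_cases hvx : v x = ⊥
  · simp [hvx]
  · exact hx'.profit_le (isTruthful_truthfulBids hv hv0 bids) hv0 (hx.truthfulBids hv0 hvx)

end XorBidding

open XorBidding

theorem truthful_bidding_weakly_dominant_general
    (T B S : ℕ)
    (v : EuclideanSpace ℝ (Fin T) → EReal) (hv : ∀ x, v x ≠ ⊤)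
    (D : Set (EuclideanSpace ℝ (Fin T))) (hD : D = {x | v x ≠ ⊥})
    (lam : Fin S → EuclideanSpace ℝ (Fin T))
    (π : Fin S → ℝ) (hπ : ∀ s, 0 ≤ π s)
    (hv0 : v 0 = 0)
    (v1 v2 : EReal)
    (hv1 : v1 = sSup {r : EReal |
      ∃ bids : Fin B → EuclideanSpace ℝ (Fin T) × ℝ,
      ∃ xs : Fin S → EuclideanSpace ℝ (Fin T),
        (∀ s : Fin S, ∃ p : ℝ,
          ((xs s, p) = ((0 : EuclideanSpace ℝ (Fin T)), (0 : ℝ)) ∨ ∃ b, (xs s, p) = bids b) ∧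
          (∀ y : EuclideanSpace ℝ (Fin T), ∀ q : ℝ,
            ((y, q) = ((0 : EuclideanSpace ℝ (Fin T)), (0 : ℝ)) ∨ ∃ b, (y, q) = bids b) →
            q - ⟪lam s, y⟫ ≤ p - ⟪lam s, xs s⟫)) ∧
        r = ∑ s, (π s : EReal) * (v (xs s) - ((⟪lam s, xs s⟫ : ℝ) : EReal))})
    (hv2 : v2 = sSup {r : EReal |
      ∃ bids : Fin B → EuclideanSpace ℝ (Fin T) × ℝ,
        (∀ b, (bids b).1 ∈ D ∧ (((bids b).2 : ℝ) : EReal) = v (bids b).1) ∧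
      ∃ xs : Fin S → EuclideanSpace ℝ (Fin T),
        (∀ s : Fin S, ∃ p : ℝ,
          ((xs s, p) = ((0 : EuclideanSpace ℝ (Fin T)), (0 : ℝ)) ∨ ∃ b, (xs s, p) = bids b) ∧
          (∀ y : EuclideanSpace ℝ (Fin T), ∀ q : ℝ,
            ((y, q) = ((0 : EuclideanSpace ℝ (Fin T)), (0 : ℝ)) ∨ ∃ b, (y, q) = bids b) →
            q - ⟪lam s, y⟫ ≤ p - ⟪lam s, xs s⟫)) ∧
        r = ∑ s, (π s : EReal) * (v (xs s) - ((⟪lam s, xs s⟫ : ℝ) : EReal))}) :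
    v2 ≥ v1 := by
  subst hv1 hv2 hD
  refine sSup_le ?_
  rintro _ ⟨bids, xs, hxs, rfl⟩
  choose xs' hxs' using fun s =>
    exists_isOptimisticOutcome (fun y => ⟪lam s, y⟫) (truthfulBids v bids)
  refine le_sSup_of_le
    ⟨truthfulBids v bids, isTruthful_truthfulBids hv hv0 bids, xs', hxs', rfl⟩ ?_
  refine Finset.sum_le_sum fun s _ => mul_le_mul_of_nonneg_left ?_ (EReal.coe_nonneg.2 (hπ s))
  obtain ⟨p, hxp, -⟩ := hxs s
  exact profit_le_of_isOptimisticOutcome_truthfulBids hv hv0 hxp (hxs' s)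

/-- Truthful bidding is weakly dominant in optimistic XOR package bid selection.

`v : ℝ^T → ℝ ∪ {−∞}` is modelled as an `EReal`-valued function never taking the
value `⊤`; its domain is `D = {x | v x ≠ ⊥}`. A bid is a pair `(x, p) ∈ ℝ^T × ℝ`.
For a tuple of `B` bids and a scenario `s`, `x*` is an optimistic outcome if it is
the profile of a pair among `{(0,0), (x₁,p₁), …, (x_B,p_B)}` whose bid surplus
`p − ⟪λ_s, x⟫` is maximal among these `B+1` pairs. `v¹` is the supremum (in
`EReal = ℝ ∪ {±∞}`, where the expected profits themselves lie in `ℝ ∪ {−∞}`)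
of the expected profit `∑ s, π s * (v x*_s − ⟪λ_s, x*_s⟫)` over all bid tuples and
optimistic outcomes; `v²` is the same supremum restricted to truthful bid tuples,
i.e. those with `x_b ∈ D` and `p_b = v x_b` for every `b`. Then `v² ≥ v¹`. -/
theorem truthful_bidding_weakly_dominant
    (T B S : ℕ) (hT : 0 < T) (hB : 0 < B) (hS : 0 < S)
    (v : EuclideanSpace ℝ (Fin T) → EReal) (hv : ∀ x, v x ≠ ⊤)
    (D : Set (EuclideanSpace ℝ (Fin T))) (hD : D = {x | v x ≠ ⊥})
    (lam : Fin S → EuclideanSpace ℝ (Fin T))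
    (π : Fin S → ℝ) (hπ : ∀ s, 0 ≤ π s) (hπ1 : ∑ s, π s = 1)
    (h0 : (0 : EuclideanSpace ℝ (Fin T)) ∈ D) (hv0 : v 0 = 0)
    (v1 v2 : EReal)
    (hv1 : v1 = sSup {r : EReal |
      ∃ bids : Fin B → EuclideanSpace ℝ (Fin T) × ℝ,
      ∃ xs : Fin S → EuclideanSpace ℝ (Fin T),
        (∀ s : Fin S, ∃ p : ℝ,
          ((xs s, p) = ((0 : EuclideanSpace ℝ (Fin T)), (0 : ℝ)) ∨ ∃ b, (xs s, p) = bids b) ∧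
          (∀ y : EuclideanSpace ℝ (Fin T), ∀ q : ℝ,
            ((y, q) = ((0 : EuclideanSpace ℝ (Fin T)), (0 : ℝ)) ∨ ∃ b, (y, q) = bids b) →
            q - ⟪lam s, y⟫ ≤ p - ⟪lam s, xs s⟫)) ∧
        r = ∑ s, (π s : EReal) * (v (xs s) - ((⟪lam s, xs s⟫ : ℝ) : EReal))})
    (hv2 : v2 = sSup {r : EReal |
      ∃ bids : Fin B → EuclideanSpace ℝ (Fin T) × ℝ,
        (∀ b, (bids b).1 ∈ D ∧ (((bids b).2 : ℝ) : EReal) = v (bids b).1) ∧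
      ∃ xs : Fin S → EuclideanSpace ℝ (Fin T),
        (∀ s : Fin S, ∃ p : ℝ,
          ((xs s, p) = ((0 : EuclideanSpace ℝ (Fin T)), (0 : ℝ)) ∨ ∃ b, (xs s, p) = bids b) ∧
          (∀ y : EuclideanSpace ℝ (Fin T), ∀ q : ℝ,
            ((y, q) = ((0 : EuclideanSpace ℝ (Fin T)), (0 : ℝ)) ∨ ∃ b, (y, q) = bids b) →
            q - ⟪lam s, y⟫ ≤ p - ⟪lam s, xs s⟫)) ∧
        r = ∑ s, (π s : EReal) * (v (xs s) - ((⟪lam s, xs s⟫ : ℝ) : EReal))}) :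
    v2 ≥ v1 :=
  truthful_bidding_weakly_dominant_general T B S v hv D hD lam π hπ hv0 v1 v2 hv1 hv2
end
end

section
/- Wasserstein bound on the expected profit loss (Theorem 1, stated via couplings): suppose D is nonempty, ‖x‖ ≤ M for every x ∈ D, and for every λ ∈ ℝ^T the supremum defining ψ(λ) = sup_{x ∈ D} (v(x) − ⟨λ, x⟩) is finite and attained. Fix scenarios λ_1, …, λ_S ∈ ℝ^T with probabilities π_s ≥ 0 summing to 1, let x̄_s ∈ D attain ψ(λ_s) for each s, define φ(λ) = max_{1 ≤ s ≤ S} (v(x̄_s) − ⟨λ, x̄_s⟩) and the profit loss Γ(λ) = ψ(λ) − φ(λ), and let Q = Σ_{s=1}^S π_s δ_{λ_s}. Let P be any Borel probability measure on ℝ^T such that Γ is P-integrable. Then for every Borel probability measure μ on ℝ^T × ℝ^T whose first marginal is P and whose second marginal is Q, and for which (λ_1, λ_2) ↦ ‖λ_1 − λ_2‖ is μ-integrable, the expected profit loss satisfies ∫ Γ dP ≤ 2M · ∫ ‖λ_1 − λ_2‖ dμ(λ_1, λ_2). (Taking the infimum over all such couplings gives E_P[Γ] ≤ 2M · d_W(P,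 Q), where d_W denotes the order-1 Wasserstein distance.) -/
open scoped RealInnerProductSpace ENNReal
open MeasureTheory

noncomputable section

/-! Both `ψ` and `φ` are maxima of affine functions `λ ↦ c x - ⟪λ, x⟫` whose slopes have norm
at most `M`, so each increases by at most `M * ‖λ₁ - λ₂‖` from `λ₂` to `λ₁`. As `x̄_s` attains
`ψ (λ_s)`, the profit loss vanishes at every scenario, hence `Γ λ ≤ 2 M ‖λ - λ_s‖` for all `s`.
Under a coupling the second coordinate is almost surely a scenario, so integrating this bound
against the coupling gives the theorem. -/

theorem sub_le_mul_norm_sub_of_isGreatest_affine {E : Type*} [NormedAddCommGroup E]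
    [InnerProductSpace ℝ E] {K : Set E} {c : E → ℝ} {M : ℝ}
    (hK : ∀ x ∈ K, ‖x‖ ≤ M) {f : E → ℝ}
    (hf : ∀ l, IsGreatest {r : ℝ | ∃ x ∈ K, r = c x - ⟪l, x⟫} (f l)) (a b : E) :
    f a - f b ≤ M * ‖a - b‖ := by
  obtain ⟨x, hxK, hfa⟩ := (hf a).1
  have hfb : c x - ⟪b, x⟫ ≤ f b := (hf b).2 ⟨x, hxK, rfl⟩
  have hslope : ⟪b - a, x⟫ ≤ M * ‖a - b‖ :=
    calc ⟪b - a, x⟫ ≤ ‖b - a‖ * ‖x‖ := real_inner_le_norm _ _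
      _ ≤ ‖b - a‖ * M := mul_le_mul_of_nonneg_left (hK x hxK) (norm_nonneg _)
      _ = M * ‖a - b‖ := by rw [norm_sub_rev, mul_comm]
  rw [inner_sub_left] at hslope
  linarith

theorem ae_mem_range_sum_smul_dirac {α ι : Type*} [MeasurableSpace α]
    [MeasurableSingletonClass α] [Fintype ι] (c : ι → ℝ≥0∞) (x : ι → α) :
    ∀ᵐ y ∂(∑ i, c i • Measure.dirac (x i)), y ∈ Set.range x := by
  rw [ae_iff]
  simp

theorem integral_le_integral_of_ae_comp_fst_le {α β : Type*} [MeasurableSpace α]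
    [MeasurableSpace β] {μ : Measure (α × β)} {f : α → ℝ} {g : α × β → ℝ}
    (hf : Integrable f (μ.map Prod.fst)) (hg : Integrable g μ)
    (hfg : ∀ᵐ p ∂μ, f p.1 ≤ g p) :
    ∫ a, f a ∂(μ.map Prod.fst) ≤ ∫ p, g p ∂μ := by
  rw [integral_map measurable_fst.aemeasurable hf.aestronglyMeasurable]
  exact integral_mono_ae (hf.comp_measurable measurable_fst) hg hfg

theorem wasserstein_bound_expected_profit_loss_general
    (T S : ℕ)
    (v : EuclideanSpace ℝ (Fin T) → EReal)
    (D : Set (EuclideanSpace ℝ (Fin T)))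
    (M : ℝ) (hnorm : ∀ x ∈ D, ‖x‖ ≤ M)
    (ψ : EuclideanSpace ℝ (Fin T) → ℝ)
    (hψ : ∀ l : EuclideanSpace ℝ (Fin T),
      IsGreatest {r : ℝ | ∃ x ∈ D, r = (v x).toReal - ⟪l, x⟫} (ψ l))
    (lam : Fin S → EuclideanSpace ℝ (Fin T))
    (π : Fin S → ℝ)
    (xbar : Fin S → EuclideanSpace ℝ (Fin T))
    (hxbarD : ∀ s, xbar s ∈ D)
    (hxbar : ∀ s, (v (xbar s)).toReal - ⟪lam s, xbar s⟫ = ψ (lam s))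
    (φ : EuclideanSpace ℝ (Fin T) → ℝ)
    (hφ : ∀ l : EuclideanSpace ℝ (Fin T),
      IsGreatest {r : ℝ | ∃ s : Fin S, r = (v (xbar s)).toReal - ⟪l, xbar s⟫} (φ l))
    (Γ : EuclideanSpace ℝ (Fin T) → ℝ) (hΓ : ∀ l, Γ l = ψ l - φ l)
    (Q : Measure (EuclideanSpace ℝ (Fin T)))
    (hQ : Q = ∑ s, ENNReal.ofReal (π s) • Measure.dirac (lam s))
    (P : Measure (EuclideanSpace ℝ (Fin T)))
    (hΓP : Integrable Γ P)
    (μ : Measure (EuclideanSpace ℝ (Fin T) × EuclideanSpace ℝ (Fin T)))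
    (hμ₁ : μ.map Prod.fst = P) (hμ₂ : μ.map Prod.snd = Q)
    (hdist : Integrable (fun p : EuclideanSpace ℝ (Fin T) × EuclideanSpace ℝ (Fin T) =>
      ‖p.1 - p.2‖) μ) :
    ∫ l, Γ l ∂P ≤ 2 * M * ∫ p, ‖p.1 - p.2‖ ∂μ := by
  have hψ_le := sub_le_mul_norm_sub_of_isGreatest_affine hnorm hψ
  have hφ_le := sub_le_mul_norm_sub_of_isGreatest_affine (K := Set.range xbar)
    (c := fun x => (v x).toReal) (f := φ)
    (by simpa only [Set.forall_mem_range] using fun s => hnorm _ (hxbarD s))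
    (by simpa only [Set.exists_range_iff] using hφ)
  have hψ_le_φ : ∀ s, ψ (lam s) ≤ φ (lam s) := fun s => hxbar s ▸ (hφ (lam s)).2 ⟨s, rfl⟩
  have hΓ_le : ∀ l s, Γ l ≤ 2 * M * ‖l - lam s‖ := fun l s => by
    have hψ_l := hψ_le l (lam s)
    have hφ_l := hφ_le (lam s) l
    rw [norm_sub_rev] at hφ_l
    rw [hΓ]
    linarith [hψ_le_φ s]
  have hscenario : ∀ᵐ p ∂μ, p.2 ∈ Set.range lam :=
    ae_of_ae_map measurable_snd.aemeasurable (hμ₂ ▸ hQ ▸ ae_mem_range_sum_smul_dirac _ _)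
  subst hμ₁
  rw [← integral_const_mul]
  refine integral_le_integral_of_ae_comp_fst_le hΓP (hdist.const_mul _) ?_
  filter_upwards [hscenario] with p ⟨s, hs⟩
  exact hs ▸ hΓ_le p.1 s

/-- Wasserstein bound on the expected profit loss (Theorem 1, stated via couplings).
`v : ℝ^T → ℝ ∪ {−∞}` is modelled as an `EReal`-valued function never taking `⊤`, with
nonempty domain `D = {x | v x ≠ ⊥}` satisfying `‖x‖ ≤ M` for every `x ∈ D` (so
`(v x).toReal` is the real value of `v x` for `x ∈ D`). For every `λ` the indirect
utility `ψ λ = sup_{x ∈ D} (v x − ⟪λ, x⟫)` is finite and attained (`IsGreatest`),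
`x̄_s ∈ D` attains `ψ (λ_s)` for each scenario `s`,
`φ λ = max_{1 ≤ s ≤ S} (v x̄_s − ⟪λ, x̄_s⟫)`, and the profit loss is `Γ = ψ − φ`.
Let `Q = ∑ s, π s • δ_{λ_s}` and let `P` be any Borel probability measure with `Γ`
`P`-integrable. Then for every coupling `μ` of `P` and `Q` for which
`(λ₁, λ₂) ↦ ‖λ₁ − λ₂‖` is `μ`-integrable,
`∫ Γ dP ≤ 2 M * ∫ ‖λ₁ − λ₂‖ dμ`. -/
theorem wasserstein_bound_expected_profit_loss
    (T S : ℕ) (hT : 0 < T) (hS : 0 < S)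
    (v : EuclideanSpace ℝ (Fin T) → EReal) (hv : ∀ x, v x ≠ ⊤)
    (D : Set (EuclideanSpace ℝ (Fin T))) (hD : D = {x | v x ≠ ⊥})
    (hDne : D.Nonempty)
    (M : ℝ) (hnorm : ∀ x ∈ D, ‖x‖ ≤ M)
    (ψ : EuclideanSpace ℝ (Fin T) → ℝ)
    (hψ : ∀ l : EuclideanSpace ℝ (Fin T),
      IsGreatest {r : ℝ | ∃ x ∈ D, r = (v x).toReal - ⟪l, x⟫} (ψ l))
    (lam : Fin S → EuclideanSpace ℝ (Fin T))
    (π : Fin S → ℝ) (hπ : ∀ s, 0 ≤ π s) (hπ1 : ∑ s, π s = 1)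
    (xbar : Fin S → EuclideanSpace ℝ (Fin T))
    (hxbarD : ∀ s, xbar s ∈ D)
    (hxbar : ∀ s, (v (xbar s)).toReal - ⟪lam s, xbar s⟫ = ψ (lam s))
    (φ : EuclideanSpace ℝ (Fin T) → ℝ)
    (hφ : ∀ l : EuclideanSpace ℝ (Fin T),
      IsGreatest {r : ℝ | ∃ s : Fin S, r = (v (xbar s)).toReal - ⟪l, xbar s⟫} (φ l))
    (Γ : EuclideanSpace ℝ (Fin T) → ℝ) (hΓ : ∀ l, Γ l = ψ l - φ l)
    (Q : Measure (EuclideanSpace ℝ (Fin T)))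
    (hQ : Q = ∑ s, ENNReal.ofReal (π s) • Measure.dirac (lam s))
    (P : Measure (EuclideanSpace ℝ (Fin T))) [IsProbabilityMeasure P]
    (hΓP : Integrable Γ P)
    (μ : Measure (EuclideanSpace ℝ (Fin T) × EuclideanSpace ℝ (Fin T)))
    [IsProbabilityMeasure μ]
    (hμ₁ : μ.map Prod.fst = P) (hμ₂ : μ.map Prod.snd = Q)
    (hdist : Integrable (fun p : EuclideanSpace ℝ (Fin T) × EuclideanSpace ℝ (Fin T) =>
      ‖p.1 - p.2‖) μ) :
    ∫ l, Γ l ∂P ≤ 2 * M * ∫ p, ‖p.1 - p.2‖ ∂μ :=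
  wasserstein_bound_expected_profit_loss_general T S v D M hnorm ψ hψ lam π xbar hxbarD hxbar φ hφ Γ
    hΓ Q hQ P hΓP μ hμ₁ hμ₂ hdist
end
end
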